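/- arXiv:2002.11172 — 5 statements merged into one kernel-verified Lean document; each statement's English description precedes it below -/
import Mathlib

section
/- Fix d, n ∈ ℕ with d, n ≥ 1, w* ∈ ℝ^d, σ > 0, and w₀ ∈ ℝ^d. Suppose an estimator has the form Alg(S; w₀) = A_X w₀ + B_X v + C_X ξ, where A_X, B_X ∈ ℝ^{d×d} and C_X ∈ ℝ^{d×n} are measurable functions of X only, v is the ground-truth parameter of the task, and (X, ξ) encodes the sample. Then E_{s∼Unif{±1}} E_{(X,ξ)} ‖Alg(S; w₀) − s w*‖² ≥ E_X ‖(I_d − B_X) w*‖² + σ² E_X tr(C_Xᵀ C_X), where X has i.i.d. N(0, I_d) rows and ξ ∼ N(0, σ² I_n) independent of X. -/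
/-!
Write the error as `(A_X w₀ - s (I - B_X) w*) + C_X ξ`. Conditionally on `X`, the noise `ξ` has
independent centred coordinates of variance `σ²`, so the cross term vanishes in expectation and
`C_X ξ` contributes exactly `σ² tr(C_Xᵀ C_X)`. Averaging the remaining deterministic part over
`s = ±1` is the parallelogram law: `½(‖a - b‖² + ‖a + b‖²) = ‖a‖² + ‖b‖² ≥ ‖b‖²` with
`b = (I - B_X) w*`.
-/

open MeasureTheory ProbabilityTheory Matrix
open scoped ENNReal

/-- Squared Euclidean norm on `ℝ^d`. -/
noncomputable def norm2 {d : ℕ} (v : Fin d → ℝ) : ℝ := ∑ i, (v i) ^ 2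

/-- Law of a design matrix `X ∈ ℝ^{n×d}` with i.i.d. `N(0, I_d)` rows. -/
noncomputable def gaussX (n d : ℕ) : Measure (Fin n → Fin d → ℝ) :=
  Measure.pi fun _ => Measure.pi fun _ => gaussianReal 0 1

/-- Law of the label noise `ξ ∼ N(0, σ² I_n)`. -/
noncomputable def gaussNoise (n : ℕ) (σ : ℝ) : Measure (Fin n → ℝ) :=
  Measure.pi fun _ => gaussianReal 0 (Real.toNNReal (σ ^ 2))

section CenteredProduct

variable {ι : Type*} [Fintype ι] {μ : ι → Measure ℝ} [∀ i, IsProbabilityMeasure (μ i)]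

lemma memLp_two_sum_mul_pi (h2 : ∀ i, MemLp id 2 (μ i)) (c : ι → ℝ) :
    MemLp (fun ξ => ∑ j, c j * ξ j) 2 (Measure.pi μ) :=
  memLp_finsetSum _ fun j _ =>
    ((h2 j).const_mul (c j)).comp_measurePreserving (measurePreserving_eval μ j)

lemma integral_sum_mul_pi (h1 : ∀ i, Integrable id (μ i)) (c : ι → ℝ) :
    ∫ ξ, ∑ j, c j * ξ j ∂Measure.pi μ = ∑ j, c j * ∫ x, x ∂μ j := by
  rw [integral_finsetSum _ fun j _ => (integrable_eval (h1 j)).const_mul (c j)]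
  simp only [integral_const_mul, integral_eval]

lemma variance_sum_mul_pi (h2 : ∀ i, MemLp id 2 (μ i)) (c : ι → ℝ) :
    Var[fun ξ => ∑ j, c j * ξ j; Measure.pi μ] = ∑ j, c j ^ 2 * Var[id; μ j] := by
  have h := variance_sum_pi fun j => (h2 j).const_mul (c j)
  rw [Finset.sum_fn] at h
  simp only [variance_const_mul] at h
  exact h

lemma integral_sq_const_add_sum_mul_pi (h2 : ∀ i, MemLp id 2 (μ i)) (h0 : ∀ i, ∫ x, x ∂μ i = 0)
    (a : ℝ) (c : ι → ℝ) :
    ∫ ξ, (a + ∑ j, c j * ξ j) ^ 2 ∂Measure.pi μ = a ^ 2 + ∑ j, c j ^ 2 * Var[id; μ j] := by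
  have hS := memLp_two_sum_mul_pi h2 c
  have hmean : ∫ ξ, a + ∑ j, c j * ξ j ∂Measure.pi μ = a := by
    rw [integral_add (integrable_const a) (hS.integrable one_le_two),
      integral_sum_mul_pi (fun i => (h2 i).integrable one_le_two)]
    simp [h0]
  have h := variance_eq_sub (X := fun ξ : ι → ℝ => a + ∑ j, c j * ξ j) ((memLp_const a).add hS)
  rw [variance_const_add hS.aestronglyMeasurable, variance_sum_mul_pi h2, hmean] at h
  simp only [Pi.pow_apply] at h
  linarith

end CenteredProduct

lemma trace_transpose_mul_self_eq_sum_sq {m n : Type*} [Fintype m] [Fintype n]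
    (c : Matrix m n ℝ) : trace (cᵀ * c) = ∑ i, ∑ j, c i j ^ 2 := by
  simp only [trace, diag, mul_apply, transpose_apply, sq]
  exact Finset.sum_comm

lemma measurable_norm2 {d : ℕ} : Measurable (norm2 : (Fin d → ℝ) → ℝ) := by
  unfold norm2; fun_prop

lemma measurable_mulVec_of_entries {α m n : Type*} [MeasurableSpace α] [Fintype n]
    {M : α → Matrix m n ℝ} (hM : ∀ i j, Measurable fun x => M x i j) (v : n → ℝ) :
    Measurable fun x => M x *ᵥ v :=
  measurable_pi_lambda _ fun i => Finset.measurable_sum _ fun j _ => (hM i j).mul_const (v j)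

lemma norm2_nonneg {d : ℕ} (v : Fin d → ℝ) : 0 ≤ norm2 v :=
  Finset.sum_nonneg fun _ _ => sq_nonneg _

lemma norm2_sub_add_norm2_add {d : ℕ} (p q : Fin d → ℝ) :
    norm2 (p - q) + norm2 (p + q) = 2 * norm2 p + 2 * norm2 q := by
  simp only [norm2, Pi.sub_apply, Pi.add_apply, Finset.mul_sum, ← Finset.sum_add_distrib]
  exact Finset.sum_congr rfl fun i _ => by ring

lemma ofReal_norm2_le_half_norm2_sub_add_norm2_add {d : ℕ} (p q : Fin d → ℝ) :
    ENNReal.ofReal (norm2 q)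
      ≤ 2⁻¹ * (ENNReal.ofReal (norm2 (p - q)) + ENNReal.ofReal (norm2 (p + q))) := by
  calc ENNReal.ofReal (norm2 q)
      ≤ ENNReal.ofReal (2⁻¹ * (norm2 (p - q) + norm2 (p + q))) := by
        apply ENNReal.ofReal_le_ofReal
        linarith [norm2_sub_add_norm2_add p q, norm2_nonneg p]
    _ = _ := by
        rw [ENNReal.ofReal_mul (by norm_num), ENNReal.ofReal_add (norm2_nonneg _) (norm2_nonneg _),
          ENNReal.ofReal_inv_of_pos two_pos, ENNReal.ofReal_ofNat]

lemma lintegral_ofReal_norm2_le_half_sum_sign {α : Type*} [MeasurableSpace α] {ν : Measure α}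
    {d : ℕ} {p q : α → Fin d → ℝ} (hp : Measurable p) (hq : Measurable q) :
    ∫⁻ x, ENNReal.ofReal (norm2 (q x)) ∂ν
      ≤ 2⁻¹ * ∑ s ∈ ({1, -1} : Finset ℝ), ∫⁻ x, ENNReal.ofReal (norm2 (p x - s • q x)) ∂ν := by
  simp only [Finset.sum_pair (show (1 : ℝ) ≠ -1 by norm_num), one_smul, neg_one_smul,
    sub_neg_eq_add]
  have hm : Measurable fun x => ENNReal.ofReal (norm2 (p x - q x)) :=
    (measurable_norm2.comp (hp.sub hq)).ennreal_ofReal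
  rw [← lintegral_add_left hm, ← lintegral_const_mul' _ _ (by simp)]
  exact lintegral_mono fun x => ofReal_norm2_le_half_norm2_sub_add_norm2_add (p x) (q x)

lemma lintegral_norm2_add_mulVec_gaussNoise {d n : ℕ} (σ : ℝ) (u : Fin d → ℝ)
    (c : Matrix (Fin d) (Fin n) ℝ) :
    ∫⁻ ξ, ENNReal.ofReal (norm2 (u + c *ᵥ ξ)) ∂gaussNoise n σ
      = ENNReal.ofReal (norm2 u) + ENNReal.ofReal (σ ^ 2) * ENNReal.ofReal (trace (cᵀ * c)) := by
  have h2 : ∀ _ : Fin n, MemLp id 2 (gaussianReal 0 (σ ^ 2).toNNReal) :=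
    fun _ => memLp_id_gaussianReal 2
  have hcoord : ∀ ξ, norm2 (u + c *ᵥ ξ) = ∑ i, (u i + ∑ j, c i j * ξ j) ^ 2 := fun ξ => by
    simp [norm2, mulVec, dotProduct]
  have hint : ∀ i, Integrable (fun ξ => (u i + ∑ j, c i j * ξ j) ^ 2) (gaussNoise n σ) :=
    fun i => ((memLp_const (u i)).add (memLp_two_sum_mul_pi h2 (c i))).integrable_sq
  have hint_norm2 : Integrable (fun ξ => norm2 (u + c *ᵥ ξ)) (gaussNoise n σ) := by
    simp_rw [hcoord]
    exact integrable_finsetSum _ fun i _ => hint i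
  have hreal : ∫ ξ, norm2 (u + c *ᵥ ξ) ∂gaussNoise n σ
      = norm2 u + σ ^ 2 * trace (cᵀ * c) := by
    simp_rw [hcoord]
    rw [integral_finsetSum _ fun i _ => hint i]
    simp only [gaussNoise, integral_sq_const_add_sum_mul_pi h2 (fun _ => integral_id_gaussianReal),
      variance_id_gaussianReal, Real.coe_toNNReal _ (sq_nonneg σ),
      trace_transpose_mul_self_eq_sum_sq]
    simp only [norm2, Finset.sum_add_distrib, Finset.mul_sum, mul_comm]
  have htrace : 0 ≤ trace (cᵀ * c) := by
    rw [trace_transpose_mul_self_eq_sum_sq]; positivity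
  rw [← ENNReal.ofReal_mul (sq_nonneg σ), ← ENNReal.ofReal_add (norm2_nonneg u) (by positivity),
    ← hreal, ofReal_integral_eq_lintegral_ofReal hint_norm2 (ae_of_all _ fun ξ => norm2_nonneg _)]

theorem linear_estimator_bias_variance_lower_bound_general
    (d n : ℕ) (wstar w0 : Fin d → ℝ) (σ : ℝ)
    (A B : (Fin n → Fin d → ℝ) → Matrix (Fin d) (Fin d) ℝ)
    (C : (Fin n → Fin d → ℝ) → Matrix (Fin d) (Fin n) ℝ)
    (hA : ∀ i j, Measurable fun X => A X i j)
    (hB : ∀ i j, Measurable fun X => B X i j) :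
    (∫⁻ X, ENNReal.ofReal
        (norm2 ((((1 : Matrix (Fin d) (Fin d) ℝ) - B X)).mulVec wstar)) ∂(gaussX n d))
      + ENNReal.ofReal (σ ^ 2) *
        (∫⁻ X, ENNReal.ofReal (Matrix.trace ((C X)ᵀ * C X)) ∂(gaussX n d))
    ≤ 2⁻¹ * ∑ s ∈ ({1, -1} : Finset ℝ),
        ∫⁻ X, ∫⁻ ξ, ENNReal.ofReal
            (norm2 ((A X).mulVec w0 + (B X).mulVec (s • wstar) + (C X).mulVec ξ - s • wstar))
          ∂(gaussNoise n σ) ∂(gaussX n d) := by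
  set bias : (Fin n → Fin d → ℝ) → Fin d → ℝ := fun X => (1 - B X) *ᵥ wstar
  have hsplit : ∀ (s : ℝ) X ξ, A X *ᵥ w0 + B X *ᵥ (s • wstar) + C X *ᵥ ξ - s • wstar
      = (A X *ᵥ w0 - s • bias X) + C X *ᵥ ξ := fun s X ξ => by
    simp only [bias, mulVec_smul, sub_mulVec, one_mulVec]
    module
  have hAw0 : Measurable fun X => A X *ᵥ w0 := measurable_mulVec_of_entries hA w0
  have hbias : Measurable bias :=
    measurable_mulVec_of_entries (fun i j => measurable_const.sub (hB i j)) wstar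
  have hmeas : ∀ s : ℝ, Measurable fun X => ENNReal.ofReal (norm2 (A X *ᵥ w0 - s • bias X)) :=
    fun s => (measurable_norm2.comp (hAw0.sub (hbias.const_smul s))).ennreal_ofReal
  simp_rw [hsplit, lintegral_norm2_add_mulVec_gaussNoise, lintegral_add_left (hmeas _),
    lintegral_const_mul' _ _ ENNReal.ofReal_ne_top]
  rw [Finset.sum_add_distrib, Finset.sum_const, Finset.card_pair (by norm_num), nsmul_eq_mul,
    mul_add, ← mul_assoc, Nat.cast_two, ENNReal.inv_mul_cancel two_ne_zero ENNReal.ofNat_ne_top,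
    one_mul]
  exact add_le_add (lintegral_ofReal_norm2_le_half_sum_sign hAw0 hbias) le_rfl

theorem linear_estimator_bias_variance_lower_bound
    (d n : ℕ) (hd : 1 ≤ d) (hn : 1 ≤ n) (wstar w0 : Fin d → ℝ) (σ : ℝ) (hσ : 0 < σ)
    (A B : (Fin n → Fin d → ℝ) → Matrix (Fin d) (Fin d) ℝ)
    (C : (Fin n → Fin d → ℝ) → Matrix (Fin d) (Fin n) ℝ)
    (hA : ∀ i j, Measurable fun X => A X i j)
    (hB : ∀ i j, Measurable fun X => B X i j)
    (hC : ∀ i j, Measurable fun X => C X i j) :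
    (∫⁻ X, ENNReal.ofReal
        (norm2 ((((1 : Matrix (Fin d) (Fin d) ℝ) - B X)).mulVec wstar)) ∂(gaussX n d))
      + ENNReal.ofReal (σ ^ 2) *
        (∫⁻ X, ENNReal.ofReal (Matrix.trace ((C X)ᵀ * C X)) ∂(gaussX n d))
    ≤ 2⁻¹ * ∑ s ∈ ({1, -1} : Finset ℝ),
        ∫⁻ X, ∫⁻ ξ, ENNReal.ofReal
            (norm2 ((A X).mulVec w0 + (B X).mulVec (s • wstar) + (C X).mulVec ξ - s • wstar))
          ∂(gaussNoise n σ) ∂(gaussX n d) :=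
  linear_estimator_bias_variance_lower_bound_general d n wstar w0 σ A B C hA hB
end

section
/- Fix d, n ∈ ℕ with d, n ≥ 1 and let X ∈ ℝ^{n×d} have i.i.d. N(0, I_d) rows. Let s₁ ≥ s₂ ≥ … ≥ s_d ≥ 0 be the eigenvalues of Σ_X = (1/n) Xᵀ X. Then for every convex function f : ℝ → ℝ (integrable against the relevant distributions): E_X[∑_{i=1}^d f(s_i)] ≥ d·f(1) if n ≥ d, and E_X[∑_{i=1}^d f(s_i)] ≥ n·f(d/n) + (d−n)·f(0) if n < d. -/
/-!
STATEMENT 8: Jensen-type lower bound on the expected sum of a convex function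
evaluated at the eigenvalues of the empirical covariance `Σ_X = (1/n) Xᵀ X` of
a standard Gaussian design matrix.
-/

open MeasureTheory ProbabilityTheory Matrix

/-- Empirical covariance `Σ_X = (1/n) Xᵀ X`. -/
noncomputable def empCov {n d : ℕ} (X : Fin n → Fin d → ℝ) : Matrix (Fin d) (Fin d) ℝ :=
  (n : ℝ)⁻¹ • ((Matrix.of X)ᵀ * Matrix.of X)

/-- The empirical covariance is symmetric (Hermitian). -/
lemma empCov_isHermitian {n d : ℕ} (X : Fin n → Fin d → ℝ) : (empCov X).IsHermitian := by
  have h : ((Matrix.of X)ᵀ * Matrix.of X : Matrix (Fin d) (Fin d) ℝ).IsHermitian := by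
    simpa using Matrix.isHermitian_conjTranspose_mul_self (Matrix.of X)
  simpa [empCov, Matrix.IsHermitian, Matrix.conjTranspose_smul] using
    congrArg (fun M => (n : ℝ)⁻¹ • M) h.eq

/-- The (nonnegative, real) eigenvalues of the empirical covariance. -/
noncomputable def empCovEig {n d : ℕ} (X : Fin n → Fin d → ℝ) : Fin d → ℝ :=
  (empCov_isHermitian X).eigenvalues

/-!
The entries of `X` are standard normal, so `E[tr Σ_X] = d`. A convex `f` lies above its
supporting line `f a + c (x - a)` at every `a`. Since `rank Σ_X ≤ n`, at least `d - n`
eigenvalues vanish; bounding `f` by the supporting line at the other `min d n` eigenvalues, with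
`a` chosen so that `min d n * a = d`, leaves only the term `c (tr Σ_X - d)`, whose mean is zero.
-/

open Set
open scoped Finset

namespace ConvexOn

variable {S : Set ℝ} {f : ℝ → ℝ} {a x : ℝ}

lemma add_rightDeriv_mul_sub_le (hf : ConvexOn ℝ S f) (ha : a ∈ interior S) (hx : x ∈ S) :
    f a + derivWithin f (Ioi a) a * (x - a) ≤ f x := by
  rcases lt_trichotomy x a with hxa | rfl | hax
  · have h := (hf.slope_le_leftDeriv_of_mem_interior hx ha hxa).trans
      (hf.leftDeriv_le_rightDeriv_of_mem_interior ha)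
    rw [slope_def_field, div_le_iff₀ (sub_pos.2 hxa)] at h
    linarith
  · simp
  · have h := hf.rightDeriv_le_slope_of_mem_interior ha hx hax
    rw [slope_def_field, le_div_iff₀ (sub_pos.2 hax)] at h
    linarith

end ConvexOn

lemma le_sum_comp_of_affine_le {ι : Type*} [Fintype ι] [DecidableEq ι] {f : ℝ → ℝ} {a c : ℝ}
    (haff : ∀ x, f a + c * (x - a) ≤ f x) {s : ι → ℝ} {T : Finset ι} (hT : ∀ i ∈ T, s i = 0) :
    #Tᶜ * f a + #T * f 0 + c * (∑ i, s i - #Tᶜ * a) ≤ ∑ i, f (s i) := by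
  have hsum : ∑ i, s i = ∑ i ∈ Tᶜ, s i := by
    rw [← Finset.sum_add_sum_compl T s, Finset.sum_eq_zero hT, zero_add]
  have hfT : ∑ i ∈ T, f (s i) = #T * f 0 := by
    rw [Finset.sum_congr rfl fun i hi => by rw [hT i hi], Finset.sum_const, nsmul_eq_mul]
  have hfTc : ∑ i ∈ Tᶜ, (f a + c * (s i - a)) ≤ ∑ i ∈ Tᶜ, f (s i) :=
    Finset.sum_le_sum fun i _ => haff (s i)
  rw [Finset.sum_add_distrib, ← Finset.mul_sum, Finset.sum_sub_distrib] at hfTc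
  simp only [Finset.sum_const, nsmul_eq_mul] at hfTc
  rw [← Finset.sum_add_sum_compl T (fun i => f (s i)), hfT, hsum]
  linarith

lemma le_integral_of_le_add_mul_sub_integral {Ω : Type*} [MeasurableSpace Ω] {μ : Measure Ω}
    [IsProbabilityMeasure μ] {g h : Ω → ℝ} (hg : Integrable g μ) (hh : Integrable h μ) {C c : ℝ}
    (hle : ∀ ω, C + c * (h ω - ∫ ω', h ω' ∂μ) ≤ g ω) : C ≤ ∫ ω, g ω ∂μ := by
  have hdev : Integrable (fun ω => c * (h ω - ∫ ω', h ω' ∂μ)) μ :=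
    (hh.sub (integrable_const _)).const_mul c
  calc C = ∫ ω, C + c * (h ω - ∫ ω', h ω' ∂μ) ∂μ := by
        rw [integral_add (integrable_const C) hdev, integral_const_mul,
          integral_sub hh (integrable_const _)]
        simp
    _ ≤ ∫ ω, g ω ∂μ := integral_mono ((integrable_const C).add hdev) hg hle

lemma integral_sq_gaussianReal_zero_one : ∫ x, x ^ 2 ∂gaussianReal 0 1 = 1 := by
  have h := variance_of_integral_eq_zero aemeasurable_id
    (integral_id_gaussianReal (μ := 0) (v := 1))
  simpa [variance_id_gaussianReal] using h.symm

lemma Matrix.IsHermitian.exists_card_eq_eigenvalues_eq_zero {ι 𝕜 : Type*} [Fintype ι]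
    [DecidableEq ι] [RCLike 𝕜] {A : Matrix ι ι 𝕜} (hA : A.IsHermitian) {m : ℕ} (hm : A.rank ≤ m) :
    ∃ T : Finset ι, #T = Fintype.card ι - m ∧ ∀ i ∈ T, hA.eigenvalues i = 0 := by
  classical
  have hzero : Fintype.card ι - m ≤ #{i | hA.eigenvalues i = 0} := by
    have hsplit := Finset.card_filter_add_card_filter_not (s := Finset.univ)
      (fun i => hA.eigenvalues i = 0)
    rw [hA.rank_eq_card_non_zero_eigs, Fintype.card_subtype] at hm
    simp only [ne_eq] at hm
    rw [Finset.card_univ] at hsplit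
    omega
  obtain ⟨T, hT, hcard⟩ := Finset.exists_subset_card_eq hzero
  exact ⟨T, hcard, fun i hi => (Finset.mem_filter.1 (hT hi)).2⟩

section gaussX

variable {n d : ℕ}

instance gaussX.instIsProbabilityMeasure : IsProbabilityMeasure (gaussX n d) := by
  unfold gaussX; infer_instance

lemma hasLaw_gaussX_apply (k : Fin n) (i : Fin d) :
    HasLaw (fun X : Fin n → Fin d → ℝ => X k i) (gaussianReal 0 1) (gaussX n d) :=
  MeasurePreserving.hasLaw <| (measurePreserving_eval (fun _ : Fin d => gaussianReal 0 1) i).comp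
    (measurePreserving_eval (fun _ : Fin n => Measure.pi fun _ : Fin d => gaussianReal 0 1) k)

lemma integrable_sq_gaussX_apply (k : Fin n) (i : Fin d) :
    Integrable (fun X : Fin n → Fin d → ℝ => X k i ^ 2) (gaussX n d) :=
  (hasLaw_gaussX_apply k i).measurePreserving (by fun_prop) |>.integrable_comp_of_integrable
    (memLp_id_gaussianReal 2).integrable_sq

lemma integral_sq_gaussX_apply (k : Fin n) (i : Fin d) :
    ∫ X, X k i ^ 2 ∂gaussX n d = 1 := by
  rw [← integral_sq_gaussianReal_zero_one]
  exact (hasLaw_gaussX_apply k i).integral_comp (f := fun x : ℝ => x ^ 2) (by fun_prop)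

lemma trace_empCov (X : Fin n → Fin d → ℝ) :
    (empCov X).trace = (n : ℝ)⁻¹ * ∑ k, ∑ i, X k i ^ 2 := by
  simp [empCov, Matrix.trace, Matrix.mul_apply, Finset.mul_sum, sq, Finset.sum_comm (γ := Fin n)]

lemma integrable_trace_empCov : Integrable (fun X => (empCov X).trace) (gaussX n d) := by
  simp_rw [trace_empCov]
  exact (integrable_finsetSum _ fun k _ =>
    integrable_finsetSum _ fun i _ => integrable_sq_gaussX_apply k i).const_mul _

lemma integral_trace_empCov (hn : n ≠ 0) : ∫ X, (empCov X).trace ∂gaussX n d = d := by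
  simp_rw [trace_empCov]
  rw [integral_const_mul, integral_finsetSum _ fun k _ =>
    integrable_finsetSum _ fun i _ => integrable_sq_gaussX_apply k i]
  simp_rw [integral_finsetSum _ fun i _ => integrable_sq_gaussX_apply _ i,
    integral_sq_gaussX_apply]
  simp only [Finset.sum_const, Finset.card_univ, Fintype.card_fin, nsmul_eq_mul, mul_one]
  field_simp

lemma sum_empCovEig (X : Fin n → Fin d → ℝ) : ∑ i, empCovEig X i = (empCov X).trace := by
  simp [empCovEig, (empCov_isHermitian X).trace_eq_sum_eigenvalues]

lemma rank_empCov_le (X : Fin n → Fin d → ℝ) : (empCov X).rank ≤ n :=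
  calc (empCov X).rank = (((n : ℝ)⁻¹ • 1) * ((Matrix.of X)ᵀ * Matrix.of X)).rank := by
        rw [smul_one_mul]; rfl
    _ ≤ (Matrix.of X).rank := (rank_mul_le_right _ _).trans (rank_mul_le_right _ _)
    _ ≤ n := rank_le_height _

-- `d - n` truncates to `0` when `d ≤ n`, so this covers both regimes.
lemma le_integral_sum_comp_empCovEig (hn : n ≠ 0) {f : ℝ → ℝ} (hf : ConvexOn ℝ univ f)
    (hint : Integrable (fun X : Fin n → Fin d → ℝ => ∑ i, f (empCovEig X i)) (gaussX n d))
    {a : ℝ} (ha : (min d n : ℕ) * a = d) :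
    (min d n : ℕ) * f a + (d - n : ℕ) * f 0 ≤ ∫ X, ∑ i, f (empCovEig X i) ∂gaussX n d := by
  refine le_integral_of_le_add_mul_sub_integral (c := derivWithin f (Ioi a) a) hint
    integrable_trace_empCov fun X => ?_
  obtain ⟨T, hT, hT0⟩ :=
    (empCov_isHermitian X).exists_card_eq_eigenvalues_eq_zero (rank_empCov_le X)
  have hTc : #Tᶜ = min d n := by rw [Finset.card_compl, hT, Fintype.card_fin]; omega
  have hsum := le_sum_comp_of_affine_le
    (fun x => hf.add_rightDeriv_mul_sub_le (a := a) (by simp) (mem_univ x)) hT0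
  rw [hTc, hT, Fintype.card_fin, ha] at hsum
  rwa [integral_trace_empCov hn, ← sum_empCovEig]

end gaussX

theorem expected_sum_convex_eigenvalues_lower_bound_general
    (d n : ℕ) (hn : 1 ≤ n) (f : ℝ → ℝ)
    (hf : ConvexOn ℝ Set.univ f)
    (hint : Integrable (fun X : Fin n → Fin d → ℝ => ∑ i, f (empCovEig X i)) (gaussX n d)) :
    (d ≤ n →
      (d : ℝ) * f 1 ≤ ∫ X, (∑ i, f (empCovEig X i)) ∂(gaussX n d)) ∧
    (n < d →
      (n : ℝ) * f ((d : ℝ) / (n : ℝ)) + ((d : ℝ) - (n : ℝ)) * f 0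
        ≤ ∫ X, (∑ i, f (empCovEig X i)) ∂(gaussX n d)) := by
  have hn0 : n ≠ 0 := by omega
  refine ⟨fun hdn => ?_, fun hnd => ?_⟩
  · have h := le_integral_sum_comp_empCovEig hn0 hf hint (a := 1) (by simp [min_eq_left hdn])
    simpa [min_eq_left hdn, Nat.sub_eq_zero_of_le hdn] using h
  · have h := le_integral_sum_comp_empCovEig hn0 hf hint (a := d / n)
      (by rw [min_eq_right hnd.le]; field_simp)
    rwa [min_eq_right hnd.le, Nat.cast_sub hnd.le] at h

theorem expected_sum_convex_eigenvalues_lower_bound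
    (d n : ℕ) (hd : 1 ≤ d) (hn : 1 ≤ n) (f : ℝ → ℝ)
    (hf : ConvexOn ℝ Set.univ f)
    (hint : Integrable (fun X : Fin n → Fin d → ℝ => ∑ i, f (empCovEig X i)) (gaussX n d)) :
    (d ≤ n →
      (d : ℝ) * f 1 ≤ ∫ X, (∑ i, f (empCovEig X i)) ∂(gaussX n d)) ∧
    (n < d →
      (n : ℝ) * f ((d : ℝ) / (n : ℝ)) + ((d : ℝ) - (n : ℝ)) * f 0
        ≤ ∫ X, (∑ i, f (empCovEig X i)) ∂(gaussX n d)) :=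
  expected_sum_convex_eigenvalues_lower_bound_general d n hn f hf hint
end

section
/- Fix d ∈ ℕ, a unit vector ŵ* ∈ ℝ^d, r > 0, s ∈ {±1}, and κ > 0. Consider the two-layer linear network population loss ℓ(A, w) = ‖Aᵀ w − s r ŵ*‖² for A ∈ ℝ^{d×d}, w ∈ ℝ^d, and the gradient flow (A(t), w(t)) given by A'(t) = s r w(t) ŵ*ᵀ − w(t) w(t)ᵀ A(t) and w'(t) = s r A(t) ŵ* − A(t) A(t)ᵀ w(t) (the negative gradients of ℓ). If A(0) = (a₀ − κ) ŵ* ŵ*ᵀ + κ I_d and w(0) = b₀ ŵ* with a₀ > b₀ ≥ 0, then as t → ∞ the flow converges to (Ā, w̄) with Ā = (ā − κ) ŵ* ŵ*ᵀ + κ I_d and w̄ = b̄ ŵ*, where c = a₀² − b₀², ā = √((c + √(4r² + c²))/2) and b̄ = s·√((−c + √(4r² + c²))/2). -/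
/-!
Along the family `A = (a - κ) ŵ ŵᵀ + κ I`, `w = b ŵ` the flow reduces to the planar system
`a' = b (s r - a b)`, `b' = a (s r - a b)`, which conserves `c = a² - b²`. Then `z = (a + b)²`
solves the Riccati equation `z' = (4 s r z - z² + c²) / 2`, whose explicit solution tends to the
positive root `2 s r + √(4 r² + c²)`; this yields the limits of `a = (z + c) / (2 √z)` and
`b = (z - c) / (2 √z)`. The vector field of the full flow is polynomial, hence locally Lipschitz,
so the solution starting on the family is the one found above.
-/

open Matrix Filter Topology Set Real
open scoped Matrix.Norms.Elementwise

theorem ODE_solution_unique_Ici_of_contDiff {E : Type*} [NormedAddCommGroup E]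
    [NormedSpace ℝ E] {v : E → E} (hv : ContDiff ℝ 1 v) {f g : ℝ → E} {t₀ : ℝ}
    (hf : ∀ t ∈ Ici t₀, HasDerivWithinAt f (v (f t)) (Ici t₀) t)
    (hg : ∀ t ∈ Ici t₀, HasDerivWithinAt g (v (g t)) (Ici t₀) t)
    (h₀ : f t₀ = g t₀) : EqOn f g (Ici t₀) := by
  intro T hT
  have hfc : ContinuousOn f (Icc t₀ T) := fun t ht =>
    (hf t ht.1).continuousWithinAt.mono Icc_subset_Ici_self
  have hgc : ContinuousOn g (Icc t₀ T) := fun t ht =>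
    (hg t ht.1).continuousWithinAt.mono Icc_subset_Ici_self
  obtain ⟨K, hK⟩ := hv.locallyLipschitz.locallyLipschitzOn.exists_lipschitzOnWith_of_compact
    ((isCompact_Icc.image_of_continuousOn hfc).union (isCompact_Icc.image_of_continuousOn hgc))
  exact ODE_solution_unique_of_mem_Icc_right (v := fun _ => v) (fun _ _ => hK) hfc
    (fun t ht => (hf t ht.1).mono (Ici_subset_Ici.2 ht.1))
    (fun t ht => Or.inl (mem_image_of_mem f (Ico_subset_Icc_self ht))) hgc
    (fun t ht => (hg t ht.1).mono (Ici_subset_Ici.2 ht.1))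
    (fun t ht => Or.inr (mem_image_of_mem g (Ico_subset_Icc_self ht))) h₀ ⟨hT, le_rfl⟩

section FlowField

variable {n : Type*} [Fintype n]

def twoLayerFlowField (v : n → ℝ) (p : Matrix n n ℝ × (n → ℝ)) : Matrix n n ℝ × (n → ℝ) :=
  (vecMulVec p.2 v - vecMulVec p.2 p.2 * p.1, p.1 *ᵥ v - (p.1 * p.1ᵀ) *ᵥ p.2)

theorem contDiff_twoLayerFlowField (v : n → ℝ) : ContDiff ℝ 1 (twoLayerFlowField v) := by
  refine ContDiff.prodMk (contDiff_pi.2 fun i => contDiff_pi.2 fun j => ?_)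
    (contDiff_pi.2 fun i => ?_)
  · simp only [Matrix.sub_apply, vecMulVec_apply, mul_apply]
    fun_prop
  · simp only [Pi.sub_apply, mulVec, dotProduct, mul_apply, transpose_apply]
    fun_prop

end FlowField

section Spiked

variable {n : Type*} [DecidableEq n] {u : n → ℝ}

def spikedMatrix (u : n → ℝ) (κ a : ℝ) : Matrix n n ℝ := (a - κ) • vecMulVec u u + κ • 1

theorem transpose_spikedMatrix (κ a : ℝ) : (spikedMatrix u κ a)ᵀ = spikedMatrix u κ a := by
  simp [spikedMatrix]

variable [Fintype n]

theorem spikedMatrix_mulVec (hu : u ⬝ᵥ u = 1) (κ a : ℝ) : spikedMatrix u κ a *ᵥ u = a • u := by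
  simp only [spikedMatrix, add_mulVec, smul_mulVec, vecMulVec_mulVec, hu, MulOpposite.op_one,
    one_smul, one_mulVec]
  module

theorem twoLayerFlowField_spiked (hu : u ⬝ᵥ u = 1) (ρ κ a b : ℝ) :
    twoLayerFlowField (ρ • u) (spikedMatrix u κ a, b • u) =
      ((b * (ρ - a * b)) • vecMulVec u u, (a * (ρ - a * b)) • u) := by
  have hvecMul : u ᵥ* spikedMatrix u κ a = a • u := by
    rw [← transpose_spikedMatrix, vecMul_transpose, spikedMatrix_mulVec hu]
  simp only [twoLayerFlowField, transpose_spikedMatrix, ← mulVec_mulVec, mulVec_smul,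
    spikedMatrix_mulVec hu, smul_vecMulVec, vecMulVec_smul, smul_mul, vecMulVec_mul, hvecMul]
  ext <;> simp [smul_smul] <;> ring

theorem hasDerivAt_spiked {a b : ℝ → ℝ} {a' b' t : ℝ} (κ : ℝ) (ha : HasDerivAt a a' t)
    (hb : HasDerivAt b b' t) :
    HasDerivAt (fun t => (spikedMatrix u κ (a t), b t • u)) (a' • vecMulVec u u, b' • u) t :=
  (((ha.sub_const κ).smul_const _).add_const _).prodMk (hb.smul_const u)

end Spiked

section Riccati

variable {p q z₀ t : ℝ}

/-- Chosen so that `(z - p) / (z - q)` decays like `exp (-(p - q) t / 2)`. -/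
noncomputable def riccatiFlow (p q z₀ t : ℝ) : ℝ :=
  (p * (z₀ - q) * exp ((p - q) / 2 * t) - q * (z₀ - p)) /
    ((z₀ - q) * exp ((p - q) / 2 * t) - (z₀ - p))

theorem riccatiFlow_zero (h : q < p) : riccatiFlow p q z₀ 0 = z₀ := by
  rw [riccatiFlow, mul_zero, exp_zero, mul_one, mul_one, div_eq_iff (by linarith)]
  ring

theorem one_le_exp_half_sub_mul (h : q < p) (ht : 0 ≤ t) : 1 ≤ exp ((p - q) / 2 * t) :=
  one_le_exp (by nlinarith)

theorem riccatiFlow_denom_pos (h : q < p) (hz₀ : q < z₀) (ht : 0 ≤ t) :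
    0 < (z₀ - q) * exp ((p - q) / 2 * t) - (z₀ - p) := by
  nlinarith [one_le_exp_half_sub_mul h ht]

theorem riccatiFlow_pos (hq : q ≤ 0) (hp : 0 < p) (hz₀ : 0 < z₀) (ht : 0 ≤ t) :
    0 < riccatiFlow p q z₀ t := by
  have hE := one_le_exp_half_sub_mul (hq.trans_lt hp) ht
  refine div_pos ?_ (riccatiFlow_denom_pos (hq.trans_lt hp) (hq.trans_lt hz₀) ht)
  nlinarith [mul_nonneg (mul_pos hp (by linarith : 0 < z₀ - q)).le (sub_nonneg.2 hE)]

theorem hasDerivAt_riccatiFlow (h : q < p) (hz₀ : q < z₀) (ht : 0 ≤ t) :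
    HasDerivAt (riccatiFlow p q z₀)
      ((p - riccatiFlow p q z₀ t) * (riccatiFlow p q z₀ t - q) / 2) t := by
  have hden := riccatiFlow_denom_pos h hz₀ ht
  have hE : HasDerivAt (fun t => exp ((p - q) / 2 * t))
      (exp ((p - q) / 2 * t) * ((p - q) / 2)) t :=
    ((hasDerivAt_id t).const_mul _).exp.congr_deriv (by simp)
  refine (((hE.const_mul (p * (z₀ - q))).sub_const (q * (z₀ - p))).div
    ((hE.const_mul (z₀ - q)).sub_const (z₀ - p)) hden.ne').congr_deriv ?_
  unfold riccatiFlow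
  generalize exp ((p - q) / 2 * t) = E at hden ⊢
  field_simp
  ring

theorem tendsto_riccatiFlow (h : q < p) (hz₀ : q < z₀) :
    Tendsto (riccatiFlow p q z₀) atTop (𝓝 p) := by
  have hden : Tendsto (fun t => (z₀ - q) * exp ((p - q) / 2 * t) - (z₀ - p)) atTop atTop :=
    tendsto_atTop_add_const_right _ _ <| (tendsto_exp_atTop.comp
      (tendsto_id.const_mul_atTop (half_pos (sub_pos.2 h)))).const_mul_atTop (sub_pos.2 hz₀)
  have hgap := ((tendsto_const_nhds (x := (p - q) * (z₀ - p))).div_atTop hden).const_add p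
  rw [add_zero] at hgap
  refine hgap.congr' ?_
  filter_upwards [eventually_ge_atTop 0] with t ht
  have hden := riccatiFlow_denom_pos h hz₀ ht
  unfold riccatiFlow
  generalize exp ((p - q) / 2 * t) = E at hden ⊢
  field_simp
  ring

end Riccati

theorem two_mul_abs_lt_sqrt {ρ c : ℝ} (hc : c ≠ 0) : 2 * |ρ| < √(4 * ρ ^ 2 + c ^ 2) :=
  (lt_sqrt (by positivity)).2 (by rw [mul_pow, sq_abs]; nlinarith [sq_pos_of_ne_zero hc])

theorem hasDerivAt_add_div_two_sqrt {z : ℝ → ℝ} {ρ e t : ℝ} (hz : 0 < z t)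
    (hz' : HasDerivAt z ((4 * ρ * z t - z t ^ 2 + e ^ 2) / 2) t) :
    HasDerivAt (fun t => (z t + e) / (2 * √(z t)))
      ((z t - e) / (2 * √(z t)) *
        (ρ - (z t + e) / (2 * √(z t)) * ((z t - e) / (2 * √(z t))))) t := by
  have hx : 0 < √(z t) := sqrt_pos.2 hz
  have hsqrt : HasDerivAt (fun t => √(z t))
      (1 / (2 * √(z t)) * ((4 * ρ * z t - z t ^ 2 + e ^ 2) / 2)) t :=
    (hasDerivAt_sqrt hz.ne').comp t hz'
  refine ((hz'.add_const e).div (hsqrt.const_mul 2) (by positivity)).congr_deriv ?_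
  have hzx : z t = √(z t) ^ 2 := (sq_sqrt hz.le).symm
  generalize √(z t) = x at hx hzx ⊢
  rw [hzx]
  field_simp
  ring

/-- The coordinate `a > 0` of the point with `a * b = ρ` on the hyperbola `a ^ 2 - b ^ 2 = c`. -/
noncomputable def equilibriumA (ρ c : ℝ) : ℝ := √((c + √(4 * ρ ^ 2 + c ^ 2)) / 2)

theorem equilibriumA_mul_sqrt (ρ c : ℝ) :
    equilibriumA ρ c * √((-c + √(4 * ρ ^ 2 + c ^ 2)) / 2) = |ρ| := by
  have hD := sq_sqrt (by positivity : 0 ≤ 4 * ρ ^ 2 + c ^ 2)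
  have hcD : |c| ≤ √(4 * ρ ^ 2 + c ^ 2) := by
    rw [← sqrt_sq_eq_abs]; exact sqrt_le_sqrt (le_add_of_nonneg_left (by positivity))
  rw [equilibriumA, ← sqrt_mul (by linarith [neg_abs_le c]), ← sqrt_sq_eq_abs]
  congr 1
  linear_combination hD / 4

theorem div_equilibriumA {r : ℝ} (hr : 0 < r) (c : ℝ) :
    r / equilibriumA r c = √((-c + √(4 * r ^ 2 + c ^ 2)) / 2) := by
  have hcD : |c| < √(4 * r ^ 2 + c ^ 2) := by
    rw [← sqrt_sq_eq_abs]; exact sqrt_lt_sqrt (sq_nonneg c) (lt_add_of_pos_left _ (by positivity))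
  have hpos : 0 < equilibriumA r c := sqrt_pos.2 (by linarith [neg_abs_le c])
  rw [div_eq_iff hpos.ne', mul_comm, equilibriumA_mul_sqrt, abs_of_pos hr]

theorem riccatiRoot_div_two_sqrt {ρ c : ℝ} (hc : 0 < c) :
    (2 * ρ + √(4 * ρ ^ 2 + c ^ 2) + c) / (2 * √(2 * ρ + √(4 * ρ ^ 2 + c ^ 2))) =
        equilibriumA ρ c ∧
      (2 * ρ + √(4 * ρ ^ 2 + c ^ 2) - c) / (2 * √(2 * ρ + √(4 * ρ ^ 2 + c ^ 2))) =
        ρ / equilibriumA ρ c := by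
  have hD := sq_sqrt (by positivity : 0 ≤ 4 * ρ ^ 2 + c ^ 2)
  have hρD := two_mul_abs_lt_sqrt (ρ := ρ) hc.ne'
  unfold equilibriumA
  generalize √(4 * ρ ^ 2 + c ^ 2) = D at hD hρD ⊢
  have hp : 0 < 2 * ρ + D := by linarith [neg_abs_le ρ]
  have hx := sq_sqrt hp.le
  have hx₀ : 0 < √(2 * ρ + D) := sqrt_pos.2 hp
  have ha : (2 * ρ + D + c) / (2 * √(2 * ρ + D)) = √((c + D) / 2) := by
    rw [eq_comm, sqrt_eq_iff_mul_self_eq_of_pos (by positivity)]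
    field_simp
    linear_combination -2 * (c + D) * hx - hD
  refine ⟨ha, ?_⟩
  rw [← ha, eq_div_iff (by positivity)]
  field_simp
  linear_combination hD - 4 * ρ * hx

theorem exists_scalarFlow (ρ a₀ b₀ : ℝ) (h : |b₀| < a₀) :
    ∃ a b : ℝ → ℝ, a 0 = a₀ ∧ b 0 = b₀ ∧
      (∀ t ≥ 0, HasDerivAt a (b t * (ρ - a t * b t)) t) ∧
      (∀ t ≥ 0, HasDerivAt b (a t * (ρ - a t * b t)) t) ∧
      Tendsto a atTop (𝓝 (equilibriumA ρ (a₀ ^ 2 - b₀ ^ 2))) ∧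
      Tendsto b atTop (𝓝 (ρ / equilibriumA ρ (a₀ ^ 2 - b₀ ^ 2))) := by
  obtain ⟨hsum, hdiff⟩ : 0 < a₀ + b₀ ∧ 0 < a₀ - b₀ := by
    constructor <;> linarith [neg_abs_le b₀, le_abs_self b₀]
  set c := a₀ ^ 2 - b₀ ^ 2
  have hc : 0 < c := by nlinarith
  have hD := sq_sqrt (by positivity : 0 ≤ 4 * ρ ^ 2 + c ^ 2)
  have hρD := two_mul_abs_lt_sqrt (ρ := ρ) hc.ne'
  set p := 2 * ρ + √(4 * ρ ^ 2 + c ^ 2)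
  set q := 2 * ρ - √(4 * ρ ^ 2 + c ^ 2)
  have hp : 0 < p := by linarith [neg_abs_le ρ]
  have hq : q ≤ 0 := by linarith [le_abs_self ρ]
  have hz₀ : 0 < (a₀ + b₀) ^ 2 := by positivity
  -- `z = (a + b) ^ 2` obeys a Riccati equation whose roots are `p` and `q`.
  set z := riccatiFlow p q ((a₀ + b₀) ^ 2)
  have hz0 : z 0 = (a₀ + b₀) ^ 2 := riccatiFlow_zero (hq.trans_lt hp)
  have hz : ∀ t ≥ 0, 0 < z t := fun t ht => riccatiFlow_pos hq hp hz₀ ht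
  have hz' : ∀ t ≥ 0, HasDerivAt z ((4 * ρ * z t - z t ^ 2 + c ^ 2) / 2) t := fun t ht =>
    (hasDerivAt_riccatiFlow (hq.trans_lt hp) (hq.trans_lt hz₀) ht).congr_deriv
      (by linear_combination hD / 2)
  obtain ⟨haLim, hbLim⟩ := riccatiRoot_div_two_sqrt (ρ := ρ) hc
  have hzLim : Tendsto z atTop (𝓝 p) := tendsto_riccatiFlow (hq.trans_lt hp) (hq.trans_lt hz₀)
  have hsqrtLim := (continuous_sqrt.tendsto p).comp hzLim
  refine ⟨fun t => (z t + c) / (2 * √(z t)), fun t => (z t - c) / (2 * √(z t)), ?_, ?_,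
    fun t ht => hasDerivAt_add_div_two_sqrt (hz t ht) (hz' t ht), fun t ht => ?_,
    haLim ▸ (hzLim.add_const c).div (hsqrtLim.const_mul 2) (by positivity),
    hbLim ▸ (hzLim.sub_const c).div (hsqrtLim.const_mul 2) (by positivity)⟩
  · simp only [hz0, sqrt_sq hsum.le, c]
    field_simp
    ring
  · simp only [hz0, sqrt_sq hsum.le, c]
    field_simp
    ring
  · have := hasDerivAt_add_div_two_sqrt (e := -c) (hz t ht) (by rw [neg_sq]; exact hz' t ht)
    simp only [← sub_eq_add_neg, sub_neg_eq_add] at this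
    exact this.congr_deriv (by ring)

theorem two_layer_gradient_flow_limit_general
    (d : ℕ) (what : Fin d → ℝ) (hunit : ∑ i, (what i) ^ 2 = 1)
    (r : ℝ) (hr : 0 < r) (s : ℝ) (hs : s = 1 ∨ s = -1)
    (κ : ℝ) (a0 b0 : ℝ) (hab : b0 < a0) (hb0 : 0 ≤ b0)
    (A : ℝ → Matrix (Fin d) (Fin d) ℝ) (w : ℝ → Fin d → ℝ)
    (hA0 : A 0 = (a0 - κ) • vecMulVec what what + κ • (1 : Matrix (Fin d) (Fin d) ℝ))
    (hw0 : w 0 = b0 • what)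
    (hodeA : ∀ t ∈ Set.Ici (0 : ℝ), ∀ i j,
      HasDerivWithinAt (fun u => A u i j)
        (((s * r) • vecMulVec (w t) what - vecMulVec (w t) (w t) * A t) i j)
        (Set.Ici 0) t)
    (hodew : ∀ t ∈ Set.Ici (0 : ℝ), ∀ i,
      HasDerivWithinAt (fun u => w u i)
        (((s * r) • (A t).mulVec what - (A t * (A t)ᵀ).mulVec (w t)) i)
        (Set.Ici 0) t) :
    (∀ i j, Tendsto (fun t => A t i j) atTop
      (𝓝 (((Real.sqrt (((a0 ^ 2 - b0 ^ 2) + Real.sqrt (4 * r ^ 2 + (a0 ^ 2 - b0 ^ 2) ^ 2)) / 2)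
              - κ) • vecMulVec what what + κ • (1 : Matrix (Fin d) (Fin d) ℝ)) i j))) ∧
    (∀ i, Tendsto (fun t => w t i) atTop
      (𝓝 ((s * Real.sqrt ((-(a0 ^ 2 - b0 ^ 2)
              + Real.sqrt (4 * r ^ 2 + (a0 ^ 2 - b0 ^ 2) ^ 2)) / 2)) * what i))) := by
  have hu : what ⬝ᵥ what = 1 := by simpa [dotProduct, sq] using hunit
  obtain ⟨a, b, ha0, hb0', ha, hb, haLim, hbLim⟩ :=
    exists_scalarFlow (s * r) a0 b0 (abs_lt.2 ⟨by linarith, hab⟩)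
  have hflow : ∀ t ∈ Ici (0 : ℝ), HasDerivWithinAt (fun t => (A t, w t))
      (twoLayerFlowField ((s * r) • what) (A t, w t)) (Ici 0) t := fun t ht =>
    (hasDerivWithinAt_pi.2 fun i => hasDerivWithinAt_pi.2 fun j => by
        simpa [twoLayerFlowField, vecMulVec_smul] using hodeA t ht i j).prodMk
      (hasDerivWithinAt_pi.2 fun i => by
        simpa [twoLayerFlowField, mulVec_smul] using hodew t ht i)
  have hspiked : ∀ t ∈ Ici (0 : ℝ),
      HasDerivWithinAt (fun t => (spikedMatrix what κ (a t), b t • what))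
        (twoLayerFlowField ((s * r) • what) (spikedMatrix what κ (a t), b t • what)) (Ici 0) t :=
    fun t ht => by
      rw [twoLayerFlowField_spiked hu]
      exact (hasDerivAt_spiked κ (ha t ht) (hb t ht)).hasDerivWithinAt
  have heq := ODE_solution_unique_Ici_of_contDiff (contDiff_twoLayerFlowField _) hflow hspiked
    (by rw [hA0, hw0, ha0, hb0']; rfl)
  have hlim := ((((haLim.sub_const κ).smul_const (vecMulVec what what)).add_const
    (κ • (1 : Matrix (Fin d) (Fin d) ℝ))).prodMk_nhds (hbLim.smul_const what)).congr'
    (eventuallyEq_of_mem (Ici_mem_atTop 0) heq).symm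
  have hsr : equilibriumA (s * r) = equilibriumA r := by
    have : (s * r) ^ 2 = r ^ 2 := by rcases hs with rfl | rfl <;> ring
    funext c
    rw [equilibriumA, equilibriumA, this]
  rw [hsr, mul_div_assoc, div_equilibriumA hr] at hlim
  exact ⟨fun i j => tendsto_pi_nhds.1 (tendsto_pi_nhds.1 hlim.fst_nhds i) j,
    fun i => tendsto_pi_nhds.1 hlim.snd_nhds i⟩

theorem two_layer_gradient_flow_limit
    (d : ℕ) (hd : 1 ≤ d) (what : Fin d → ℝ) (hunit : ∑ i, (what i) ^ 2 = 1)
    (r : ℝ) (hr : 0 < r) (s : ℝ) (hs : s = 1 ∨ s = -1)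
    (κ : ℝ) (hκ : 0 < κ) (a0 b0 : ℝ) (hab : b0 < a0) (hb0 : 0 ≤ b0)
    (A : ℝ → Matrix (Fin d) (Fin d) ℝ) (w : ℝ → Fin d → ℝ)
    (hA0 : A 0 = (a0 - κ) • vecMulVec what what + κ • (1 : Matrix (Fin d) (Fin d) ℝ))
    (hw0 : w 0 = b0 • what)
    (hodeA : ∀ t ∈ Set.Ici (0 : ℝ), ∀ i j,
      HasDerivWithinAt (fun u => A u i j)
        (((s * r) • vecMulVec (w t) what - vecMulVec (w t) (w t) * A t) i j)
        (Set.Ici 0) t)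
    (hodew : ∀ t ∈ Set.Ici (0 : ℝ), ∀ i,
      HasDerivWithinAt (fun u => w u i)
        (((s * r) • (A t).mulVec what - (A t * (A t)ᵀ).mulVec (w t)) i)
        (Set.Ici 0) t) :
    (∀ i j, Tendsto (fun t => A t i j) atTop
      (𝓝 (((Real.sqrt (((a0 ^ 2 - b0 ^ 2) + Real.sqrt (4 * r ^ 2 + (a0 ^ 2 - b0 ^ 2) ^ 2)) / 2)
              - κ) • vecMulVec what what + κ • (1 : Matrix (Fin d) (Fin d) ℝ)) i j))) ∧
    (∀ i, Tendsto (fun t => w t i) atTop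
      (𝓝 ((s * Real.sqrt ((-(a0 ^ 2 - b0 ^ 2)
              + Real.sqrt (4 * r ^ 2 + (a0 ^ 2 - b0 ^ 2) ^ 2)) / 2)) * what i))) :=
  two_layer_gradient_flow_limit_general d what hunit r hr s hs κ a0 b0 hab hb0 A w hA0 hw0 hodeA
    hodew
end

section
/- Fix r > 0 and s ∈ {±1}, and consider the planar ODE a'(t) = s r b(t) − b(t)² a(t), b'(t) = s r a(t) − a(t)² b(t). Along any solution, the quantity a(t)² − b(t)² is constant in t; moreover, if a(0) > b(0) ≥ 0 and c = a(0)² − b(0)², then (a(t), b(t)) converges as t → ∞ to the fixed point (ā, b̄) with ā = √((c + √(4r² + c²))/2) and b̄ = s·√((−c + √(4r² + c²))/2), which satisfies ā b̄ = s r and ā² − b̄² = c. -/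
/-!
Two quantities evolve simply along the flow: `a² − b²` has derivative `0`, and the product
`p = a b` satisfies `(p − s r)' = −(a² + b²)(p − s r)`. Since `a² + b² ≥ a² − b² = c > 0`, Grönwall's
inequality applied to `(p − s r)²` gives `p → s r` exponentially fast. For `a ≥ 0` the pair `(a, b)`
is recovered from `(c, p)`: `a²` is the positive root of `X² − c X − p² = 0`, and `b = p / a`.
Since `a² = b² + c ≥ c`, `a` never vanishes and so stays positive; hence `(a, b)` converges to
the point `(ā, b̄)` recovered in the same way from `(c, s r)`.
-/

open Filter Topology Set

theorem le_mul_exp_neg_of_hasDerivWithinAt_le {V V' : ℝ → ℝ} {k : ℝ}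
    (hV : ∀ t ∈ Ici (0 : ℝ), HasDerivWithinAt V (V' t) (Ici 0) t)
    (hV' : ∀ t ∈ Ici (0 : ℝ), V' t ≤ -k * V t) {t : ℝ} (ht : 0 ≤ t) :
    V t ≤ V 0 * Real.exp (-k * t) := by
  have h := le_gronwallBound_of_liminf_deriv_right_le (K := -k) (ε := 0) (b := t)
    (fun x hx => (hV x hx.1).continuousWithinAt.mono Icc_subset_Ici_self)
    (fun x hx _ hr => ((hV x hx.1).mono (Ici_subset_Ici.2 hx.1)).liminf_right_slope_le hr)
    le_rfl (fun x hx => (hV' x hx.1).trans_eq (add_zero _).symm) t ⟨ht, le_rfl⟩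
  simpa [gronwallBound_ε0] using h

theorem tendsto_zero_of_hasDerivWithinAt_neg_mul {q w : ℝ → ℝ} {k : ℝ} (hk : 0 < k)
    (hq : ∀ t ∈ Ici (0 : ℝ), HasDerivWithinAt q (-(w t * q t)) (Ici 0) t)
    (hw : ∀ t ∈ Ici (0 : ℝ), k ≤ w t) : Tendsto q atTop (𝓝 0) := by
  have hsq : ∀ t ∈ Ici (0 : ℝ), q t ^ 2 ≤ q 0 ^ 2 * Real.exp (-(2 * k) * t) := by
    refine fun t ht => le_mul_exp_neg_of_hasDerivWithinAt_le (V' := fun t => -(2 * w t * q t ^ 2))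
      (fun t ht => ((hq t ht).fun_pow 2).congr_deriv (by push_cast; ring)) (fun t ht => ?_) ht
    nlinarith [hw t ht, sq_nonneg (q t)]
  have hbound : Tendsto (fun t => q 0 ^ 2 * Real.exp (-(2 * k) * t)) atTop (𝓝 0) := by
    simpa using (Real.tendsto_exp_atBot.comp
      (tendsto_id.const_mul_atTop_of_neg (by linarith : -(2 * k) < 0))).const_mul (q 0 ^ 2)
  have hsq_tendsto : Tendsto (fun t => q t ^ 2) atTop (𝓝 0) :=
    tendsto_of_tendsto_of_tendsto_of_le_of_le' tendsto_const_nhds hbound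
      (Eventually.of_forall fun t => sq_nonneg (q t))
      (eventually_ge_atTop 0 |>.mono hsq)
  rw [tendsto_zero_iff_abs_tendsto_zero]
  simpa [Function.comp_def, Real.sqrt_sq_eq_abs] using hsq_tendsto.sqrt

theorem IsPreconnected.pos_of_ne_zero {X : Type*} [TopologicalSpace X] {S : Set X}
    (hS : IsPreconnected S) {f : X → ℝ} (hf : ContinuousOn f S) {x y : X} (hx : x ∈ S)
    (hy : y ∈ S) (hfx : 0 < f x) (hne : ∀ z ∈ S, f z ≠ 0) : 0 < f y := by
  by_contra! hfy
  obtain ⟨z, hz, hfz⟩ := hS.intermediate_value hy hx hf ⟨hfy, hfx.le⟩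
  exact hne z hz hfz

namespace PlanarFlow

/-- `fixedA c p ^ 2` is the positive root of `X² − c X − p²`; the limit point of the flow is
`(fixedA c r, s * fixedB c r)`. -/
noncomputable def fixedA (c p : ℝ) : ℝ := √((c + √(4 * p ^ 2 + c ^ 2)) / 2)

noncomputable def fixedB (c p : ℝ) : ℝ := √((-c + √(4 * p ^ 2 + c ^ 2)) / 2)

theorem abs_le_sqrt_discr (c p : ℝ) : |c| ≤ √(4 * p ^ 2 + c ^ 2) :=
  Real.abs_le_sqrt (by nlinarith [sq_nonneg p])

theorem fixedA_sq_sub_mul {x : ℝ} (hx : 0 ≤ x) (y : ℝ) : fixedA (x ^ 2 - y ^ 2) (x * y) = x := by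
  have hdiscr : 4 * (x * y) ^ 2 + (x ^ 2 - y ^ 2) ^ 2 = (x ^ 2 + y ^ 2) ^ 2 := by ring
  rw [fixedA, hdiscr, Real.sqrt_sq (by positivity)]
  simpa using Real.sqrt_sq hx

theorem fixedA_mul_fixedB (c : ℝ) {p : ℝ} (hp : 0 ≤ p) : fixedA c p * fixedB c p = p := by
  have h := abs_le_sqrt_discr c p
  rw [fixedA, fixedB, ← Real.sqrt_mul (by linarith [neg_le_abs c])]
  have hprod : (c + √(4 * p ^ 2 + c ^ 2)) / 2 * ((-c + √(4 * p ^ 2 + c ^ 2)) / 2) = p ^ 2 := by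
    linear_combination Real.sq_sqrt (by positivity : (0 : ℝ) ≤ 4 * p ^ 2 + c ^ 2) / 4
  rw [hprod, Real.sqrt_sq hp]

theorem fixedA_sq_sub_fixedB_sq (c p : ℝ) : fixedA c p ^ 2 - fixedB c p ^ 2 = c := by
  have h := abs_le_sqrt_discr c p
  rw [fixedA, fixedB, Real.sq_sqrt (by linarith [neg_le_abs c]),
    Real.sq_sqrt (by linarith [le_abs_self c])]
  ring

theorem fixedA_pos {c : ℝ} (hc : 0 < c) (p : ℝ) : 0 < fixedA c p :=
  Real.sqrt_pos.2 (by linarith [abs_le_sqrt_discr c p, le_abs_self c])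

theorem continuous_fixedA (c : ℝ) : Continuous (fixedA c) := by
  unfold fixedA
  fun_prop

theorem fixedA_mul_of_sq_eq_one (c : ℝ) {s : ℝ} (hs : s ^ 2 = 1) (p : ℝ) :
    fixedA c (s * p) = fixedA c p := by
  rw [fixedA, fixedA, mul_pow, hs, one_mul]

def IsSolution (r s : ℝ) (a b : ℝ → ℝ) : Prop :=
  (∀ t ∈ Ici (0 : ℝ), HasDerivWithinAt a (s * r * b t - b t ^ 2 * a t) (Ici 0) t) ∧
    ∀ t ∈ Ici (0 : ℝ), HasDerivWithinAt b (s * r * a t - a t ^ 2 * b t) (Ici 0) t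

variable {r s : ℝ} {a b : ℝ → ℝ}

theorem hasDerivWithinAt_sq_sub_sq (h : IsSolution r s a b) {t : ℝ} (ht : t ∈ Ici 0) :
    HasDerivWithinAt (fun t => a t ^ 2 - b t ^ 2) 0 (Ici 0) t :=
  (((h.1 t ht).pow 2).sub ((h.2 t ht).pow 2)).congr_deriv (by push_cast; ring)

theorem sq_sub_sq_eq (h : IsSolution r s a b) :
    ∀ t ∈ Ici (0 : ℝ), a t ^ 2 - b t ^ 2 = a 0 ^ 2 - b 0 ^ 2 := fun t ht =>
  constant_of_has_deriv_right_zero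
    (fun _ hx => (hasDerivWithinAt_sq_sub_sq h hx.1).continuousWithinAt.mono
      Icc_subset_Ici_self)
    (fun _ hx => (hasDerivWithinAt_sq_sub_sq h hx.1).mono (Ici_subset_Ici.2 hx.1))
    t ⟨ht, le_rfl⟩

theorem hasDerivWithinAt_mul_sub (h : IsSolution r s a b) {t : ℝ} (ht : t ∈ Ici 0) :
    HasDerivWithinAt (fun t => a t * b t - s * r)
      (-((a t ^ 2 + b t ^ 2) * (a t * b t - s * r))) (Ici 0) t :=
  (((h.1 t ht).mul (h.2 t ht)).sub_const (s * r)).congr_deriv (by ring)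

theorem tendsto_a_mul_b (h : IsSolution r s a b) (hc : 0 < a 0 ^ 2 - b 0 ^ 2) :
    Tendsto (fun t => a t * b t) atTop (𝓝 (s * r)) := by
  have hdecay := tendsto_zero_of_hasDerivWithinAt_neg_mul hc
    (fun _ => hasDerivWithinAt_mul_sub h)
    (fun t ht => by nlinarith [sq_sub_sq_eq h t ht, sq_nonneg (b t)])
  simpa using hdecay.add_const (s * r)

theorem a_pos (h : IsSolution r s a b) (ha : 0 < a 0) (hc : 0 < a 0 ^ 2 - b 0 ^ 2) {t : ℝ}
    (ht : t ∈ Ici 0) : 0 < a t :=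
  isPreconnected_Ici.pos_of_ne_zero (fun x hx => (h.1 x hx).continuousWithinAt)
    self_mem_Ici ht ha fun x hx hax => by
      nlinarith [sq_sub_sq_eq h x hx, sq_nonneg (b x)]

end PlanarFlow

open PlanarFlow in
theorem planar_gradient_flow
    (r : ℝ) (hr : 0 < r) (s : ℝ) (hs : s = 1 ∨ s = -1)
    (a b : ℝ → ℝ)
    (hodea : ∀ t ∈ Set.Ici (0 : ℝ),
      HasDerivWithinAt a (s * r * b t - (b t) ^ 2 * a t) (Set.Ici 0) t)
    (hodeb : ∀ t ∈ Set.Ici (0 : ℝ),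
      HasDerivWithinAt b (s * r * a t - (a t) ^ 2 * b t) (Set.Ici 0) t) :
    (∀ t ∈ Set.Ici (0 : ℝ), (a t) ^ 2 - (b t) ^ 2 = (a 0) ^ 2 - (b 0) ^ 2) ∧
    (b 0 < a 0 → 0 ≤ b 0 →
      (Tendsto a atTop
        (𝓝 (Real.sqrt ((((a 0) ^ 2 - (b 0) ^ 2)
          + Real.sqrt (4 * r ^ 2 + ((a 0) ^ 2 - (b 0) ^ 2) ^ 2)) / 2)))) ∧
      (Tendsto b atTop
        (𝓝 (s * Real.sqrt ((-((a 0) ^ 2 - (b 0) ^ 2)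
          + Real.sqrt (4 * r ^ 2 + ((a 0) ^ 2 - (b 0) ^ 2) ^ 2)) / 2)))) ∧
      (Real.sqrt ((((a 0) ^ 2 - (b 0) ^ 2)
          + Real.sqrt (4 * r ^ 2 + ((a 0) ^ 2 - (b 0) ^ 2) ^ 2)) / 2))
        * (s * Real.sqrt ((-((a 0) ^ 2 - (b 0) ^ 2)
          + Real.sqrt (4 * r ^ 2 + ((a 0) ^ 2 - (b 0) ^ 2) ^ 2)) / 2)) = s * r ∧
      (Real.sqrt ((((a 0) ^ 2 - (b 0) ^ 2)
          + Real.sqrt (4 * r ^ 2 + ((a 0) ^ 2 - (b 0) ^ 2) ^ 2)) / 2)) ^ 2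
        - (s * Real.sqrt ((-((a 0) ^ 2 - (b 0) ^ 2)
          + Real.sqrt (4 * r ^ 2 + ((a 0) ^ 2 - (b 0) ^ 2) ^ 2)) / 2)) ^ 2
        = (a 0) ^ 2 - (b 0) ^ 2) := by
  have h : IsSolution r s a b := ⟨hodea, hodeb⟩
  have hcons := sq_sub_sq_eq h
  refine ⟨hcons, fun hba hb0 => ?_⟩
  set c := a 0 ^ 2 - b 0 ^ 2
  have hc : 0 < c := by nlinarith
  have hs2 : s ^ 2 = 1 := by rcases hs with rfl | rfl <;> norm_num
  have hA := fixedA_pos hc r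
  have hAB := fixedA_mul_fixedB c hr.le
  have hapos : ∀ t ∈ Ici (0 : ℝ), 0 < a t := fun t ht =>
    a_pos h (hb0.trans_lt hba) hc ht
  have ha_eq : ∀ t ∈ Ici (0 : ℝ), fixedA c (a t * b t) = a t := fun t ht => by
    rw [← hcons t ht, fixedA_sq_sub_mul (hapos t ht).le]
  have hprod := tendsto_a_mul_b h hc
  have ha : Tendsto a atTop (𝓝 (fixedA c r)) := by
    rw [← fixedA_mul_of_sq_eq_one c hs2 r]
    exact ((continuous_fixedA c).tendsto _).comp hprod |>.congr'
      (eventually_ge_atTop 0 |>.mono ha_eq)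
  have hb : Tendsto b atTop (𝓝 (s * fixedB c r)) := by
    have hlim : s * r / fixedA c r = s * fixedB c r := by
      rw [div_eq_iff hA.ne']
      linear_combination (-s) * hAB
    rw [← hlim]
    exact (hprod.div ha hA.ne').congr' (eventually_ge_atTop 0 |>.mono fun t ht =>
      mul_div_cancel_left₀ (b t) (hapos t ht).ne')
  refine ⟨ha, hb, ?_, ?_⟩
  · change fixedA c r * (s * fixedB c r) = s * r
    rw [mul_left_comm, hAB]
  · change fixedA c r ^ 2 - (s * fixedB c r) ^ 2 = c
    rw [mul_pow, hs2, one_mul, fixedA_sq_sub_fixedB_sq]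
end

section
/- There exists an absolute constant c > 0 such that for every d ∈ ℕ with d ≥ 11, every n ∈ ℕ₊, and all G, V > 0, there exist: a domain Z, a parameter class Θ ⊆ ℝ^d, a family of loss functions ℓ_z : Θ → ℝ for z ∈ Z that are each convex and G-Lipschitz with respect to the Euclidean norm, and a probability distribution μ over probability distributions ρ on Z (with ℓ_ρ(θ) := E_{z∼ρ} ℓ_z(θ) and Θ*_ρ := argmin_{θ∈Θ} ℓ_ρ(θ)), such that: (i) min_{φ∈Θ} E_{ρ∼μ} ‖φ − Proj_{Θ*_ρ}(φ)‖ ≤ V, and (ii) for every (measurable) algorithm Alg : Z^n → Θ, the excess risk E_{ρ∼μ} E_{S∼ρ^n} [ℓ_ρ(Alg(S)) − min_{θ∈Θ} ℓ_ρ(θ)] ≥ c · G · V · min{1/√n, 1/√d}. -/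
/-!
Le Cam's two-point method. On the ball of radius `V` take the linear losses `±G θᵢ`, and let
the meta-distribution pick, with probability `1/2` each, a coin of bias `1/2 + ε` or its
mirror image. Every minimiser lies in the ball, which gives the variation bound at `φ = 0`.
The two tasks have excess risks `2εG (V ± θᵢ)`, so any estimator pays on average at least
`2εGV (1 - ‖Pⁿ - Qⁿ‖₁ / 2)`, where `Pⁿ` and `Qⁿ` are the two laws of the sample. Through the
Hellinger affinity, `‖Pⁿ - Qⁿ‖₁² ≤ 4 (1 - (1 - 4ε²)ⁿ) ≤ 16 n ε²`; for
`ε = min (1/√n) (1/√d) / 4` this is at most `1`, leaving `εGV`.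
-/

open MeasureTheory ProbabilityTheory unitInterval

instance MeasureTheory.Measure.instMeasurableSingletonClass {X : Type*} [MeasurableSpace X]
    [Countable X] [MeasurableSingletonClass X] : MeasurableSingletonClass (Measure X) where
  measurableSet_singleton ρ₀ := by
    have : {ρ₀} = ⋂ x : X, {ρ : Measure X | ρ {x} = ρ₀ {x}} := by
      ext ρ
      simp [Measure.ext_iff_singleton]
    rw [this]
    exact .iInter fun x => Measure.measurable_coe (.singleton x) (.singleton _)

theorem ae_bernoulliMeasure {X : Type*} [MeasurableSpace X] [MeasurableSingletonClass X]
    {P : X → Prop} {x y : X} (hx : P x) (hy : P y) (p : I) :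
    ∀ᵐ z ∂Ber(x, y, p), P z := by
  rw [bernoulliMeasure_def, ae_add_measure_iff]
  exact ⟨Measure.ae_smul_measure (by rwa [ae_dirac_eq]) _,
    Measure.ae_smul_measure (by rwa [ae_dirac_eq]) _⟩

theorem integral_pi_eq_sum {α ι : Type*} [Fintype α] [MeasurableSpace α]
    [MeasurableSingletonClass α] [Fintype ι] [DecidableEq ι] (ρ : Measure α)
    [IsFiniteMeasure ρ] (f : (ι → α) → ℝ) :
    ∫ S, f S ∂Measure.pi (fun _ => ρ) = ∑ S, (∏ i, ρ.real {S i}) * f S := by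
  rw [integral_fintype .of_finite]
  refine Finset.sum_congr rfl fun S _ => ?_
  rw [smul_eq_mul, ← Set.univ_pi_singleton, measureReal_def, Measure.pi_pi, ENNReal.toReal_prod]
  rfl

theorem bernoulliMeasure_real_singleton (p : I) (z : Bool) :
    Ber(true, false, p).real {z} = cond z (p : ℝ) (1 - p) := by
  cases z <;> simp

theorem bernoulliMeasure_swap_real_singleton (p : I) (z : Bool) :
    Ber(false, true, p).real {z} = cond z (1 - p : ℝ) p := by
  cases z <;> simp

theorem Metric.infDist_le_of_subset_closedBall {E : Type*} [PseudoMetricSpace E] {x : E}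
    {s : Set E} {r : ℝ} (hs : s ⊆ closedBall x r) (hr : 0 ≤ r) : infDist x s ≤ r := by
  rcases s.eq_empty_or_nonempty with rfl | ⟨y, hy⟩
  · simpa using hr
  · exact (infDist_le_dist_of_mem hy).trans (by simpa [dist_comm] using hs hy)

theorem integral_infDist_le_of_subset_closedBall {X E : Type*} [MeasurableSpace X]
    [PseudoMetricSpace E] (μ : Measure X) [IsProbabilityMeasure μ] {x : E} {s : X → Set E}
    {r : ℝ} (hs : ∀ ρ, s ρ ⊆ Metric.closedBall x r) (hr : 0 ≤ r) :
    ∫ ρ, Metric.infDist x (s ρ) ∂μ ≤ r := by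
  have h := norm_integral_le_of_norm_le_const (μ := μ) (.of_forall fun ρ =>
    (Real.norm_of_nonneg Metric.infDist_nonneg).trans_le
      (Metric.infDist_le_of_subset_closedBall (hs ρ) hr))
  rw [probReal_univ, mul_one] at h
  exact (le_abs_self _).trans h

theorem sInf_image_closedBall_mul_apply {ι : Type*} [Fintype ι] [DecidableEq ι] (i : ι)
    (r : ℝ) {V : ℝ} (hV : 0 ≤ V) :
    sInf ((fun θ : EuclideanSpace ℝ ι => r * θ i) '' Metric.closedBall 0 V)
      = -(|r| * V) := by
  refine IsLeast.csInf_eq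
    ⟨⟨EuclideanSpace.single i (if 0 ≤ r then -V else V), ?_, ?_⟩, ?_⟩
  · split_ifs <;> simp [abs_of_nonneg hV]
  · split_ifs with h
    · simp [abs_of_nonneg h]
    · simp [abs_of_neg (not_le.1 h)]
  · rintro _ ⟨θ, hθ, rfl⟩
    have hθi : |θ i| ≤ V := (PiLp.norm_apply_le θ i).trans (by simpa using hθ)
    exact (abs_le.1 ((abs_mul r (θ i)).trans_le
      (mul_le_mul_of_nonneg_left hθi (abs_nonneg r)))).1

theorem sq_sum_abs_sq_sub_sq_le {ι : Type*} [Fintype ι] {a b : ι → ℝ}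
    (ha : 0 ≤ a) (hb : 0 ≤ b) (ha1 : ∑ i, a i ^ 2 = 1) (hb1 : ∑ i, b i ^ 2 = 1) :
    (∑ i, |a i ^ 2 - b i ^ 2|) ^ 2 ≤ 4 * (1 - (∑ i, a i * b i) ^ 2) := by
  set B := ∑ i, a i * b i
  have hsub : ∑ i, |a i - b i| ^ 2 = 2 - 2 * B := by
    simp only [sq_abs, sub_sq, Finset.sum_add_distrib, Finset.sum_sub_distrib, ha1, hb1, B,
      Finset.mul_sum, mul_assoc]
    ring
  have hadd : ∑ i, (a i + b i) ^ 2 = 2 + 2 * B := by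
    simp only [add_sq, Finset.sum_add_distrib, ha1, hb1, B, Finset.mul_sum, mul_assoc]
    ring
  calc (∑ i, |a i ^ 2 - b i ^ 2|) ^ 2
      = (∑ i, |a i - b i| * (a i + b i)) ^ 2 := by
        congr 1
        refine Finset.sum_congr rfl fun i _ => ?_
        rw [sq_sub_sq, abs_mul, abs_of_nonneg (add_nonneg (ha i) (hb i)), mul_comm]
    _ ≤ (∑ i, |a i - b i| ^ 2) * ∑ i, (a i + b i) ^ 2 :=
        Finset.sum_mul_sq_le_sq_mul_sq _ _ _
    _ = 4 * (1 - B ^ 2) := by rw [hsub, hadd]; ring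

theorem sq_sum_abs_prod_sub_prod_le {α : Type*} [Fintype α] (n : ℕ) {p q : α → ℝ}
    (hp : 0 ≤ p) (hq : 0 ≤ q) (hp1 : ∑ z, p z = 1) (hq1 : ∑ z, q z = 1) :
    (∑ S : Fin n → α, |∏ i, p (S i) - ∏ i, q (S i)|) ^ 2
      ≤ 4 * (1 - (∑ z, Real.sqrt (p z * q z)) ^ (2 * n)) := by
  have hsq : ∀ (w : α → ℝ), 0 ≤ w → ∀ S : Fin n → α,
      (∏ i, Real.sqrt (w (S i))) ^ 2 = ∏ i, w (S i) := fun w hw S => by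
    rw [← Finset.prod_pow]
    exact Finset.prod_congr rfl fun i _ => Real.sq_sqrt (hw _)
  have hmass : ∀ (w : α → ℝ), 0 ≤ w → ∑ z, w z = 1 →
      ∑ S : Fin n → α, (∏ i, Real.sqrt (w (S i))) ^ 2 = 1 := fun w hw hw1 => by
    simp only [hsq w hw, ← Fintype.sum_pow, hw1, one_pow]
  have h := sq_sum_abs_sq_sub_sq_le (a := fun S : Fin n → α => ∏ i, Real.sqrt (p (S i)))
    (b := fun S => ∏ i, Real.sqrt (q (S i)))
    (fun S => Finset.prod_nonneg fun i _ => Real.sqrt_nonneg _)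
    (fun S => Finset.prod_nonneg fun i _ => Real.sqrt_nonneg _) (hmass p hp hp1) (hmass q hq hq1)
  simp only [hsq p hp, hsq q hq, ← Finset.prod_mul_distrib, ← Real.sqrt_mul (hp _)] at h
  rwa [← Fintype.sum_pow (fun z => Real.sqrt (p z * q z)), ← pow_mul, mul_comm n 2] at h

theorem sum_abs_prod_cond_sub_prod_cond_le (n : ℕ) {p : ℝ} (hp0 : 0 ≤ p) (hp1 : p ≤ 1) :
    ∑ S : Fin n → Bool, |∏ i, cond (S i) p (1 - p) - ∏ i, cond (S i) (1 - p) p|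
      ≤ 2 * |2 * p - 1| * Real.sqrt n := by
  have hq0 : 0 ≤ 1 - p := sub_nonneg.2 hp1
  have h := sq_sum_abs_prod_sub_prod_le n (p := fun z => cond z p (1 - p))
    (q := fun z => cond z (1 - p) p) (fun z => by cases z <;> assumption)
    (fun z => by cases z <;> assumption) (by simp) (by simp)
  have haff : (∑ z : Bool, Real.sqrt (cond z p (1 - p) * cond z (1 - p) p)) ^ 2
      = 1 - (2 * p - 1) ^ 2 := by
    simp only [Fintype.sum_bool, cond_true, cond_false]
    rw [mul_comm (1 - p), ← two_mul, mul_pow, Real.sq_sqrt (mul_nonneg hp0 hq0)]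
    ring
  have hbern : 1 - n * (2 * p - 1) ^ 2 ≤ (1 - (2 * p - 1) ^ 2) ^ n := by
    have := one_add_mul_le_pow (a := -(2 * p - 1) ^ 2) (by nlinarith) n
    rwa [← sub_eq_add_neg, mul_neg, ← sub_eq_add_neg] at this
  rw [pow_mul, haff] at h
  refine (pow_le_pow_iff_left₀ (Finset.sum_nonneg fun _ _ => abs_nonneg _) (by positivity)
    two_ne_zero).1 (h.trans ?_)
  rw [mul_pow, mul_pow, sq_abs, Real.sq_sqrt n.cast_nonneg]
  nlinarith

theorem two_point_lower_bound {Ω : Type*} [Fintype Ω] {P Q A : Ω → ℝ} (r : ℝ) {V : ℝ}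
    (hP : ∑ S, P S = 1) (hQ : ∑ S, Q S = 1) (hA : ∀ S, |A S| ≤ V) :
    |r| * V * (1 - (∑ S, |P S - Q S|) / 2)
      ≤ (∑ S, P S * (r * A S + |r| * V) + ∑ S, Q S * (-r * A S + |r| * V)) / 2 := by
  have hdiff : |∑ S, (P S - Q S) * A S| ≤ (∑ S, |P S - Q S|) * V :=
    calc |∑ S, (P S - Q S) * A S| ≤ ∑ S, |P S - Q S| * |A S| := by
          simpa only [abs_mul] using Finset.abs_sum_le_sum_abs (fun S => (P S - Q S) * A S) _
      _ ≤ ∑ S, |P S - Q S| * V :=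
          Finset.sum_le_sum fun S _ => mul_le_mul_of_nonneg_left (hA S) (abs_nonneg _)
      _ = (∑ S, |P S - Q S|) * V := (Finset.sum_mul _ _ _).symm
  have hsplit : (∑ S, P S * (r * A S + |r| * V) + ∑ S, Q S * (-r * A S + |r| * V)) / 2
      = r / 2 * ∑ S, (P S - Q S) * A S + |r| * V * (∑ S, P S + ∑ S, Q S) / 2 := by
    simp only [Finset.mul_sum, ← Finset.sum_add_distrib, Finset.sum_div]
    exact Finset.sum_congr rfl fun S _ => by ring
  rw [hsplit, hP, hQ]
  have := abs_le.1 ((abs_mul (r / 2) _).trans_le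
    (mul_le_mul_of_nonneg_left hdiff (abs_nonneg (r / 2))))
  rw [abs_div, abs_two] at this
  linarith [this.1]

namespace ConvexMetaLearning

def signedCoordLoss {ι : Type*} (G : ℝ) (i : ι) (z : Bool) (θ : EuclideanSpace ℝ ι) : ℝ :=
  cond z G (-G) * θ i

noncomputable def coinPair (p : I) : Measure (Measure Bool) :=
  Ber(Ber(true, false, p), Ber(false, true, p), ⟨1 / 2, by norm_num⟩)

instance (p : I) : IsProbabilityMeasure (coinPair p) := by
  unfold coinPair; infer_instance

theorem ae_isProbabilityMeasure_coinPair (p : I) :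
    ∀ᵐ ρ ∂coinPair p, IsProbabilityMeasure ρ :=
  ae_bernoulliMeasure (by infer_instance) (by infer_instance) _

theorem integral_coinPair (p : I) (f : Measure Bool → ℝ) :
    ∫ ρ, f ρ ∂coinPair p = (f Ber(true, false, p) + f Ber(false, true, p)) / 2 := by
  rw [coinPair, integral_bernoulliMeasure]
  simp only [smul_eq_mul]
  ring

variable {ι : Type*} {G V : ℝ} {i : ι}

theorem convexOn_signedCoordLoss (z : Bool) {s : Set (EuclideanSpace ℝ ι)}
    (hs : Convex ℝ s) : ConvexOn ℝ s (signedCoordLoss G i z) :=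
  (cond z G (-G) • (EuclideanSpace.proj i : EuclideanSpace ℝ ι →L[ℝ] ℝ).toLinearMap).convexOn hs

theorem lipschitzWith_signedCoordLoss [Fintype ι] (hG : 0 ≤ G) (z : Bool) :
    LipschitzWith (Real.toNNReal G) (signedCoordLoss G i z) := by
  refine LipschitzWith.of_dist_le_mul fun θ θ' => ?_
  have hz : |cond z G (-G)| = G := by cases z <;> simp [abs_of_nonneg hG]
  rw [Real.coe_toNNReal G hG, signedCoordLoss, signedCoordLoss, Real.dist_eq, ← mul_sub,
    abs_mul, hz, ← Real.dist_eq]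
  exact mul_le_mul_of_nonneg_left (PiLp.dist_apply_le θ θ' i) hG

theorem excessRisk_signedCoordLoss [Fintype ι] [DecidableEq ι] (ρ : Measure Bool) (hV : 0 ≤ V)
    (θ : EuclideanSpace ℝ ι) :
    (∫ z, signedCoordLoss G i z θ ∂ρ)
        - sInf ((fun θ' => ∫ z, signedCoordLoss G i z θ' ∂ρ) '' Metric.closedBall 0 V)
      = (∫ z, cond z G (-G) ∂ρ) * θ i + |∫ z, cond z G (-G) ∂ρ| * V := by
  simp only [signedCoordLoss, integral_mul_const, sInf_image_closedBall_mul_apply i _ hV,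
    sub_neg_eq_add]

theorem le_integral_excessRisk_coinPair [Fintype ι] [DecidableEq ι] {n : ℕ} (p : I) (hV : 0 ≤ V)
    (Alg : (Fin n → Bool) → EuclideanSpace ℝ ι)
    (hAlg : ∀ S, Alg S ∈ Metric.closedBall 0 V) :
    |(2 * (p : ℝ) - 1) * G| * V * (1 - |2 * (p : ℝ) - 1| * Real.sqrt n) ≤
      ∫ ρ, (∫ S, ((∫ z, signedCoordLoss G i z (Alg S) ∂ρ) -
          sInf ((fun θ => ∫ z, signedCoordLoss G i z θ ∂ρ) '' Metric.closedBall 0 V))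
        ∂(Measure.pi fun _ : Fin n => ρ)) ∂coinPair p := by
  set r := (2 * (p : ℝ) - 1) * G
  have hmeanP : ∫ z, cond z G (-G) ∂Ber(true, false, p) = r := by
    simp only [integral_bernoulliMeasure, smul_eq_mul, cond_true, cond_false, r]
    ring
  have hmeanQ : ∫ z, cond z G (-G) ∂Ber(false, true, p) = -r := by
    simp only [integral_bernoulliMeasure, smul_eq_mul, cond_true, cond_false, r]
    ring
  have hmass : ∀ a b : ℝ, a + b = 1 → ∑ S : Fin n → Bool, ∏ j, cond (S j) a b = 1 := by
    intro a b h
    rw [← Fintype.sum_pow (fun z => cond z a b), Fintype.sum_bool, cond_true, cond_false, h,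
      one_pow]
  have hA : ∀ S, |Alg S i| ≤ V := fun S =>
    (PiLp.norm_apply_le (Alg S) i).trans (by simpa using hAlg S)
  have hL1 := sum_abs_prod_cond_sub_prod_cond_le n p.2.1 p.2.2
  rw [integral_coinPair]
  simp only [excessRisk_signedCoordLoss _ hV, integral_pi_eq_sum, bernoulliMeasure_real_singleton,
    bernoulliMeasure_swap_real_singleton, hmeanP, hmeanQ, abs_neg]
  refine le_trans ?_
    (two_point_lower_bound r (hmass p (1 - p) (by ring)) (hmass (1 - p) p (by ring)) hA)
  gcongr
  linarith

end ConvexMetaLearning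

open ConvexMetaLearning

theorem convex_meta_learning_GV_lower_bound :
    ∃ c : ℝ, 0 < c ∧
      ∀ (d n : ℕ), 11 ≤ d → 1 ≤ n → ∀ G V : ℝ, 0 < G → 0 < V →
        ∃ (Z : Type) (_ : MeasurableSpace Z)
          (Θ : Set (EuclideanSpace ℝ (Fin d)))
          (ℓ : Z → EuclideanSpace ℝ (Fin d) → ℝ)
          (μ : Measure (Measure Z)),
          IsProbabilityMeasure μ ∧
          (∀ᵐ ρ ∂μ, IsProbabilityMeasure ρ) ∧
          (∀ z : Z, ConvexOn ℝ Θ (ℓ z)) ∧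
          (∀ z : Z, LipschitzOnWith (Real.toNNReal G) (ℓ z) Θ) ∧
          (∃ φ ∈ Θ,
            (∫ ρ, Metric.infDist φ
                {θ | θ ∈ Θ ∧ IsMinOn (fun θ' => ∫ z, ℓ z θ' ∂ρ) Θ θ} ∂μ) ≤ V) ∧
          (∀ Alg : (Fin n → Z) → EuclideanSpace ℝ (Fin d),
            Measurable Alg → (∀ S, Alg S ∈ Θ) →
            c * G * V * min (1 / Real.sqrt (n : ℝ)) (1 / Real.sqrt (d : ℝ)) ≤
              ∫ ρ, (∫ S, ((∫ z, ℓ z (Alg S) ∂ρ) -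
                  sInf ((fun θ => ∫ z, ℓ z θ ∂ρ) '' Θ))
                ∂(Measure.pi fun _ : Fin n => ρ)) ∂μ) := by
  refine ⟨1 / 4, by norm_num, fun d n hd hn G V hG hV => ?_⟩
  set ε := min (1 / Real.sqrt n) (1 / Real.sqrt d) / 4
  have hsn : 1 ≤ Real.sqrt n := Real.one_le_sqrt.2 (by exact_mod_cast hn)
  have hε : 0 ≤ ε := by positivity
  have hεn : 4 * ε * Real.sqrt n ≤ 1 := by
    have : ε ≤ 1 / Real.sqrt n / 4 :=
      div_le_div_of_nonneg_right (min_le_left _ _) (by norm_num)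
    calc 4 * ε * Real.sqrt n ≤ 4 * (1 / Real.sqrt n / 4) * Real.sqrt n := by gcongr
      _ = 1 := by field_simp
  let p : I := ⟨1 / 2 + ε, by constructor <;> nlinarith⟩
  let i : Fin d := ⟨0, by omega⟩
  refine ⟨Bool, inferInstance, Metric.closedBall 0 V, signedCoordLoss G i,
    coinPair p, inferInstance, ae_isProbabilityMeasure_coinPair p,
    fun z => convexOn_signedCoordLoss z (convex_closedBall 0 V),
    fun z => (lipschitzWith_signedCoordLoss hG.le z).lipschitzOnWith,
    ⟨0, Metric.mem_closedBall_self hV.le, ?_⟩, fun Alg _ hAlg => ?_⟩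
  · exact integral_infDist_le_of_subset_closedBall _ (fun ρ θ hθ => hθ.1) hV.le
  · refine le_trans ?_ (le_integral_excessRisk_coinPair p hV.le Alg hAlg)
    have h2p : 2 * (p : ℝ) - 1 = 2 * ε := by simp only [p]; ring
    have hmin : min (1 / Real.sqrt n) (1 / Real.sqrt d) = 4 * ε := by simp only [ε]; ring
    rw [h2p, hmin, abs_of_nonneg (by positivity), abs_of_nonneg (by positivity)]
    nlinarith [mul_nonneg (mul_nonneg hε hG.le) hV.le]
end
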